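/- Let n ≥ 1 and let B ∈ ℝ^{n×n} be nonsingular and cyclic (minimal polynomial equals characteristic polynomial), with characteristic polynomial splitting over ℝ and every root of the minimal polynomial having multiplicity at most two in the minimal polynomial. Then for every ξ ∈ ℝⁿ with det[ξ, Bξ, …, B^{n−1}ξ] ≠ 0 there exists ρ > 0 such that every η ∈ ℝⁿ with ‖η − ξ‖ < ρ can be reached from ξ: that is, ξ can be steered to η in the system x(k+1) = (I + u(k)B)x(k). -/

import Mathlib

open Matrix MeasureTheory Polynomial

/-- The product `(I + u(l-1)B) ⋯ (I + u(1)B)(I + u(0)B)`. -/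
noncomputable def prodCtrl {n : ℕ} (B : Matrix (Fin n) (Fin n) ℝ) (l : ℕ) (u : ℕ → ℝ) :
    Matrix (Fin n) (Fin n) ℝ :=
  ((List.range l).reverse.map fun k => (1 : Matrix (Fin n) (Fin n) ℝ) + u k • B).prod

/-- `ξ` can be steered to `η` in the system `x(k+1) = (I + u(k)B) x(k)`. -/
noncomputable def steers {n : ℕ} (B : Matrix (Fin n) (Fin n) ℝ) (ξ η : Fin n → ℝ) : Prop :=
  ∃ l : ℕ, 1 ≤ l ∧ ∃ u : ℕ → ℝ, (prodCtrl B l u).mulVec ξ = η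

/-- Near-controllability: outside two Lebesgue-null sets, any state can be steered to any state. -/
noncomputable def nearlyControllable {n : ℕ} (B : Matrix (Fin n) (Fin n) ℝ) : Prop :=
  ∃ E F : Set (Fin n → ℝ), volume E = 0 ∧ volume F = 0 ∧
    ∀ ξ ∉ E, ∀ η ∉ F, steers B ξ η

/-- The matrix `[ξ, Bξ, B²ξ, …, B^{n-1}ξ]`. -/
noncomputable def ctrlMat {n : ℕ} (B : Matrix (Fin n) (Fin n) ℝ) (ξ : Fin n → ℝ) :
    Matrix (Fin n) (Fin n) ℝ :=
  Matrix.of fun i j => (B ^ (j : ℕ)).mulVec ξ i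

/-- The `N × N` Jordan block with eigenvalue `lam`. -/
def jordanBlock (N : ℕ) (lam : ℝ) : Matrix (Fin N) (Fin N) ℝ :=
  Matrix.of fun i j => if i = j then lam else if (j : ℕ) = (i : ℕ) + 1 then 1 else 0

/-- Block-diagonal Jordan matrix: `r` two-dimensional Jordan blocks with eigenvalues
`lam 0, …, lam (r-1)` followed by `1 × 1` blocks `lam r, …, lam (m-1)` (so `n = m + r`). -/
def pairJordan (n r : ℕ) (lam : ℕ → ℝ) : Matrix (Fin n) (Fin n) ℝ :=
  Matrix.of fun i j =>
    if (i : ℕ) = (j : ℕ) then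
      (if (i : ℕ) < 2 * r then lam ((i : ℕ) / 2) else lam ((i : ℕ) - r))
    else if (j : ℕ) = (i : ℕ) + 1 ∧ (i : ℕ) < 2 * r ∧ (i : ℕ) % 2 = 0 then 1 else 0

/-!
Choose controls `c_k` (`k < l`, `n ≤ l`, the first `n` of them distinct and nonzero) with
`∏ (I + c_k B) = I`. Perturbing the first `n` controls gives a polynomial map
`a ↦ ∏ (I + (c_k + a_k) B) ξ` sending `0` to `ξ`; its derivative at `0` is invertible, so by the
inverse function theorem its image is a neighbourhood of `ξ`.

Such controls exist because `χ_B` divides `h²`, where `h = ∏ (X - λ)` over the distinct eigenvalues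
and `0` (`χ_B` splits with multiplicities at most two). For small `δ ≠ 0`, `h² - δ²` has
`2 deg h ≥ n` simple real roots `s ≠ 0`, and `∏ (1 - X / s) = 1 - h² / δ² ≡ 1 [mod χ_B]`.

The derivative sends `v` to `B R(B) r_v(B) ξ`, where `R` is the product of the unperturbed
factors and `r_v = ∑_j v_j ∏_{k ≠ j} (1 + c_k X)` (`j, k < n`). Since `B R(B)` is invertible, `ξ`
is a cyclic vector and `deg r_v < n`, a zero derivative forces `r_v = 0`, and evaluating at
`-1 / c_j` gives `v_j = 0`.
-/

open Finset Filter Topology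

theorem Set.mem_uIcc_of_mul_neg {α : Type*} [Ring α] [LinearOrder α] [IsStrictOrderedRing α]
    {a b d : α} (hab : a * b < 0) (ha : |d| ≤ |a|) (hb : |d| ≤ |b|) : d ∈ Set.uIcc a b := by
  rw [Set.mem_uIcc]
  rcases mul_neg_iff.1 hab with ⟨ha0, hb0⟩ | ⟨ha0, hb0⟩
  · rw [abs_of_pos ha0] at ha
    rw [abs_of_neg hb0] at hb
    exact Or.inr ⟨by simpa using (abs_le.1 hb).1, (abs_le.1 ha).2⟩
  · rw [abs_of_neg ha0] at ha
    rw [abs_of_pos hb0] at hb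
    exact Or.inl ⟨by simpa using (abs_le.1 ha).1, (abs_le.1 hb).2⟩

theorem eventually_nhdsGT_forall_lt {α ι : Type*} [TopologicalSpace α] [LinearOrder α]
    [OrderTopology α] {x : α} (s : Finset ι) {a : ι → α} (ha : ∀ i ∈ s, x < a i) :
    ∀ᶠ y in 𝓝[>] x, ∀ i ∈ s, y < a i :=
  (Filter.eventually_all_finset s).2 fun i hi => nhdsWithin_le_nhds (eventually_lt_nhds (ha i hi))

theorem exists_injOn_eval_prod_X_sub_C_eq (T : Finset ℝ) :
    ∃ δ > 0, ∀ d, |d| ≤ δ → ∃ x : ℝ → ℝ, Set.InjOn x T ∧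
      ∀ μ ∈ T, (∏ ν ∈ T, (X - C ν)).eval (x μ) = d := by
  set h := ∏ ν ∈ T, (X - C ν)
  have heval : ∀ x, h.eval x = ∏ ν ∈ T, (x - ν) := fun x => by simp [h, eval_prod]
  obtain ⟨ε, hgap, hε⟩ : ∃ ε, (∀ μ ∈ T, ∀ ν ∈ T.erase μ, ε < |μ - ν| / 2) ∧ 0 < ε :=
    ((Filter.eventually_all_finset T).2 fun μ _ => eventually_nhdsGT_forall_lt (T.erase μ)
      fun ν hν => half_pos (abs_pos.2 (sub_ne_zero.2 (ne_of_mem_erase hν).symm))).and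
      self_mem_nhdsWithin |>.exists
  have hsign : ∀ μ ∈ T, h.eval (μ - ε) * h.eval (μ + ε) < 0 := by
    intro μ hμ
    rw [heval, heval, ← prod_mul_distrib, ← mul_prod_erase T _ hμ]
    refine mul_neg_of_neg_of_pos (by nlinarith) (prod_pos fun ν hν => ?_)
    have := hgap μ hμ ν hν
    nlinarith [sq_abs (μ - ν), abs_nonneg (μ - ν)]
  obtain ⟨δ, hδ, hδpos⟩ : ∃ δ, (∀ μ ∈ T, δ < min |h.eval (μ - ε)| |h.eval (μ + ε)|) ∧ 0 < δ :=
    (eventually_nhdsGT_forall_lt T fun μ hμ => lt_min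
      (abs_pos.2 (left_ne_zero_of_mul (hsign μ hμ).ne))
      (abs_pos.2 (right_ne_zero_of_mul (hsign μ hμ).ne))).and self_mem_nhdsWithin |>.exists
  refine ⟨δ, hδpos, fun d hd => ?_⟩
  have hroot : ∀ μ ∈ T, ∃ x, |x - μ| ≤ ε ∧ h.eval x = d := by
    intro μ hμ
    have hmem := Set.mem_uIcc_of_mul_neg (hsign μ hμ)
      (hd.trans ((hδ μ hμ).trans_le (min_le_left ..)).le)
      (hd.trans ((hδ μ hμ).trans_le (min_le_right ..)).le)
    obtain ⟨x, hx, hxd⟩ := intermediate_value_uIcc h.continuous.continuousOn hmem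
    rw [Set.uIcc_of_le (by linarith)] at hx
    exact ⟨x, abs_le.2 ⟨by linarith [hx.1], by linarith [hx.2]⟩, hxd⟩
  choose! x hxμ hxd using hroot
  refine ⟨x, fun μ hμ ν hν hxy => ?_, hxd⟩
  by_contra hne
  have hμν := hgap μ hμ ν (mem_erase.2 ⟨Ne.symm hne, hν⟩)
  have h1 : |μ - x μ| ≤ ε := abs_sub_comm μ (x μ) ▸ hxμ μ hμ
  have h2 : |x μ - ν| ≤ ε := hxy ▸ hxμ ν hν
  linarith [abs_sub_le μ (x μ) ν]

theorem Polynomial.Monic.eq_prod_X_sub_C_of_forall_isRoot {R : Type*} [CommRing R] [IsDomain R]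
    {p : R[X]} (hp : p.Monic) {S : Finset R} (hdeg : p.natDegree ≤ #S)
    (hroot : ∀ s ∈ S, p.IsRoot s) : p = ∏ s ∈ S, (X - C s) := by
  refine eq_of_monic_of_dvd_of_natDegree_le (monic_prod_of_monic _ _ fun s _ => monic_X_sub_C s)
    hp ?_ (by rw [natDegree_prod_of_monic _ _ fun s _ => monic_X_sub_C s]; simpa using hdeg)
  rw [prod_eq_multiset_prod, Multiset.prod_X_sub_C_dvd_iff_le_roots hp.ne_zero,
    Multiset.le_iff_subset S.nodup]
  exact fun s hs => (mem_roots hp.ne_zero).2 (hroot s hs)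

theorem prod_one_sub_C_inv_mul_X {K : Type*} [Field K] {S : Finset K} (hS : 0 ∉ S) :
    ∏ s ∈ S, (1 - C s⁻¹ * X) = C (∏ s ∈ S, -s)⁻¹ * ∏ s ∈ S, (X - C s) := by
  rw [← prod_inv_distrib, map_prod, ← prod_mul_distrib]
  refine prod_congr rfl fun s hs => ?_
  have : s ≠ 0 := ne_of_mem_of_not_mem hs hS
  rw [mul_sub, ← C_mul, inv_neg, neg_mul, inv_mul_cancel₀ this, C_neg, C_neg, C_1]
  ring

theorem exists_prod_X_sub_C_eq_sq_sub_C {T : Finset ℝ} (hT : T.Nonempty) :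
    ∃ δ ≠ 0, ∃ S : Finset ℝ, #S = 2 * #T ∧
      ∏ s ∈ S, (X - C s) = (∏ μ ∈ T, (X - C μ)) ^ 2 - C (δ ^ 2) := by
  obtain ⟨δ, hδ, hroots⟩ := exists_injOn_eval_prod_X_sub_C_eq T
  set h := ∏ μ ∈ T, (X - C μ)
  obtain ⟨x, hx, hxδ⟩ := hroots δ (abs_of_pos hδ).le
  obtain ⟨y, hy, hyδ⟩ := hroots (-δ) (by rw [abs_neg, abs_of_pos hδ])
  have hdisj : Disjoint (T.image x) (T.image y) := by
    simp only [disjoint_left, mem_image, not_exists, not_and]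
    rintro _ ⟨μ, hμ, rfl⟩ ν hν hνμ
    have := hxδ μ hμ
    rw [← hνμ, hyδ ν hν] at this
    linarith
  have hh : h.Monic := monic_prod_of_monic _ _ fun μ _ => monic_X_sub_C μ
  have hdeg : h.natDegree = #T := by
    rw [natDegree_prod_of_monic _ _ fun μ _ => monic_X_sub_C μ]; simp
  refine ⟨δ, hδ.ne', T.image x ∪ T.image y, ?_, Eq.symm ?_⟩
  · rw [card_union_of_disjoint hdisj, card_image_of_injOn hx, card_image_of_injOn hy]; ring
  refine Monic.eq_prod_X_sub_C_of_forall_isRoot ((hh.pow 2).sub_of_left ?_) ?_ ?_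
  · exact degree_C_le.trans_lt (natDegree_pos_iff_degree_pos.1
      (by rw [natDegree_pow, hdeg]; exact mul_pos two_pos hT.card_pos))
  · rw [card_union_of_disjoint hdisj, card_image_of_injOn hx, card_image_of_injOn hy,
      natDegree_sub_C, natDegree_pow, hdeg]; omega
  · simp only [mem_union, mem_image]
    rintro _ (⟨μ, hμ, rfl⟩ | ⟨μ, hμ, rfl⟩) <;> simp [IsRoot, hxδ, hyδ, hμ]

theorem exists_finset_dvd_prod_one_add_C_mul_X_sub_one {χ : ℝ[X]} (hχ : χ ≠ 0)
    (hsplit : χ.Splits) (hmult : ∀ μ, χ.rootMultiplicity μ ≤ 2) :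
    ∃ U : Finset ℝ, χ.natDegree ≤ #U ∧ U.Nonempty ∧ 0 ∉ U ∧
      χ ∣ ∏ u ∈ U, (1 + C u * X) - 1 := by
  classical
  obtain ⟨δ, hδ, S, hS, hSprod⟩ :=
    exists_prod_X_sub_C_eq_sq_sub_C (insert_nonempty 0 χ.roots.toFinset)
  set T := insert 0 χ.roots.toFinset
  set h := ∏ μ ∈ T, (X - C μ)
  have hle : χ.roots ≤ (h ^ 2).roots := by
    rw [roots_pow, roots_prod_X_sub_C, Multiset.le_iff_count]
    intro a
    by_cases ha : a ∈ χ.roots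
    · rw [Multiset.count_nsmul, Multiset.count_eq_one_of_mem T.nodup
        (mem_insert_of_mem (Multiset.mem_toFinset.2 ha)), count_roots]
      exact hmult a
    · simp [Multiset.count_eq_zero.2 ha]
  have h0 : eval 0 h = 0 := by
    rw [eval_prod]; exact prod_eq_zero (mem_insert_self 0 _) (by simp)
  have hSeval : ∏ s ∈ S, -s = -δ ^ 2 := by
    simpa [eval_prod, h0] using congrArg (eval 0) hSprod
  have hS0 : 0 ∉ S := fun h0S => by
    rw [prod_eq_zero h0S neg_zero] at hSeval
    exact pow_ne_zero 2 hδ (neg_eq_zero.1 hSeval.symm)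
  have hprod : ∏ s ∈ S, (1 - C s⁻¹ * X) = 1 - C (δ ^ 2)⁻¹ * h ^ 2 := by
    rw [prod_one_sub_C_inv_mul_X hS0, hSprod, hSeval, inv_neg, map_neg, neg_mul, mul_sub,
      ← C_mul, inv_mul_cancel₀ (pow_ne_zero 2 hδ), C_1]
    ring
  have hinj : Function.Injective fun s : ℝ => -s⁻¹ := neg_injective.comp inv_injective
  refine ⟨S.image fun s => -s⁻¹, ?_, ?_, ?_, ?_⟩
  · rw [card_image_of_injective _ hinj, hS, hsplit.natDegree_eq_card_roots]
    simpa [h, roots_pow, roots_prod_X_sub_C, mul_comm] using Multiset.card_le_card hle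
  · exact (card_pos.1 (by rw [hS]; exact mul_pos two_pos (insert_nonempty _ _).card_pos)).image _
  · simpa using hS0
  · rw [prod_image fun s _ t _ hst => hinj hst]
    simp only [map_neg, neg_mul, ← sub_eq_add_neg, hprod, sub_sub_cancel_left]
    exact ((hsplit.dvd_of_roots_le_roots hχ hle).mul_left _).neg_right

theorem eq_zero_of_sum_smul_prod_erase_one_add_C_mul_X_eq_zero {K ι : Type*} [Field K]
    [DecidableEq ι] {s : Finset ι} {c : ι → K} (hc : Set.InjOn c s) (hc0 : ∀ i ∈ s, c i ≠ 0)
    {v : ι → K} (h : ∑ i ∈ s, v i • ∏ j ∈ s.erase i, (1 + C (c j) * X) = 0) :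
    ∀ i ∈ s, v i = 0 := by
  intro i hi
  have hroot : eval (-(c i)⁻¹) (1 + C (c i) * X) = 0 := by
    simp [mul_inv_cancel₀ (hc0 i hi)]
  have heval := congrArg (eval (-(c i)⁻¹)) h
  rw [eval_finsetSum, sum_eq_single_of_mem i hi fun j hj hji => by
    rw [eval_smul, eval_prod, prod_eq_zero (mem_erase.2 ⟨hji.symm, hi⟩) hroot, smul_zero]] at heval
  rw [eval_smul, eval_zero, smul_eq_mul, mul_eq_zero, eval_prod, prod_eq_zero_iff] at heval
  refine heval.resolve_right fun ⟨j, hj, hj0⟩ => ?_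
  obtain ⟨hji, hj⟩ := mem_erase.1 hj
  have hcji : c j ≠ c i := fun h => hji (hc hj hi h)
  simp only [eval_add, eval_one, eval_mul, eval_C, eval_X] at hj0
  field_simp [hc0 i hi] at hj0
  exact hcji (by linear_combination -hj0)

theorem degree_prod_erase_one_add_C_mul_X_lt {R ι : Type*} [CommRing R] [DecidableEq ι]
    {s : Finset ι} {k : ι} (hk : k ∈ s) (c : ι → R) :
    (∏ j ∈ s.erase k, (1 + C (c j) * X)).degree < (#s : WithBot ℕ) := by
  refine degree_le_natDegree.trans_lt (Nat.cast_lt.2 ((natDegree_prod_le _ _).trans_lt ?_))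
  refine (sum_le_card_nsmul _ _ 1 fun j _ => (natDegree_add_le _ _).trans
    (max_le (by simp) (by simpa using natDegree_C_mul_X_pow_le (c j) 1))).trans_lt ?_
  simpa using card_erase_lt_of_mem hk

theorem isUnit_aeval_of_dvd {R A : Type*} [CommSemiring R] [Semiring A] [Algebra R A] {x : A}
    {p q : R[X]} (hq : aeval x q = 1) (hpq : p ∣ q) : IsUnit (aeval x p) := by
  obtain ⟨r, rfl⟩ := hpq
  rw [map_mul] at hq
  exact (((Commute.all p r).map (aeval x)).isUnit_mul_iff.1 (hq ▸ isUnit_one)).1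

theorem sum_smul_X_mul_prod_erase_range {R : Type*} [CommRing R] (f : ℕ → R[X]) {w : ℕ → R}
    {n l : ℕ} (hnl : n ≤ l) (hw : ∀ k, n ≤ k → w k = 0) :
    ∑ k ∈ range l, w k • (X * ∏ j ∈ (range l).erase k, f j) =
      X * (∏ j ∈ Ico n l, f j) * ∑ k ∈ range n, w k • ∏ j ∈ (range n).erase k, f j := by
  rw [← sum_range_add_sum_Ico _ hnl, sum_eq_zero (s := Ico n l) fun k hk => by
    rw [hw k (mem_Ico.1 hk).1, zero_smul], add_zero, mul_sum]
  refine sum_congr rfl fun k hk => ?_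
  have hkn := mem_range.1 hk
  have hsplit : (range l).erase k = (range n).erase k ∪ Ico n l := by
    ext j; simp only [mem_erase, mem_range, mem_union, mem_Ico]; omega
  have hdisj : Disjoint ((range n).erase k) (Ico n l) := by
    simp only [disjoint_left, mem_erase, mem_range, mem_Ico]; omega
  rw [hsplit, prod_union hdisj, mul_smul_comm]
  ring_nf

theorem mul_sum_smul_X_mul_prod_erase {R ι : Type*} [CommRing R] [DecidableEq ι] (f : ι → R[X])
    (w : ι → R) {s : Finset ι} {i : ι} (hi : i ∉ s) :
    f i * ∑ k ∈ s, w k • (X * ∏ j ∈ s.erase k, f j) + w i • (X * ∏ j ∈ s, f j) =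
      ∑ k ∈ insert i s, w k • (X * ∏ j ∈ (insert i s).erase k, f j) := by
  rw [sum_insert hi, erase_insert hi, add_comm, mul_sum]
  congr 1
  refine sum_congr rfl fun k hk => ?_
  rw [erase_insert_of_ne (ne_of_mem_of_not_mem hk hi).symm,
    prod_insert fun h => hi (mem_of_mem_erase h), mul_smul_comm]
  ring_nf

theorem ctrlMat_mulVec_coeff {n : ℕ} (B : Matrix (Fin n) (Fin n) ℝ) (ξ : Fin n → ℝ) {p : ℝ[X]}
    (hp : p.natDegree < n) : ctrlMat B ξ *ᵥ (fun i => p.coeff i) = aeval B p *ᵥ ξ := by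
  rw [aeval_eq_sum_range' hp, ← Fin.sum_univ_eq_sum_range (fun i => p.coeff i • B ^ i)]
  ext i
  simp only [ctrlMat, mulVec, dotProduct, of_apply, Matrix.sum_apply, Matrix.smul_apply,
    smul_eq_mul, sum_mul]
  rw [sum_comm]
  exact sum_congr rfl fun _ _ => sum_congr rfl fun _ _ => by ring

theorem eq_zero_of_aeval_mulVec_eq_zero {n : ℕ} {B : Matrix (Fin n) (Fin n) ℝ} {ξ : Fin n → ℝ}
    (hξ : (ctrlMat B ξ).det ≠ 0) {p : ℝ[X]} (hp : p.degree < n) (h : aeval B p *ᵥ ξ = 0) :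
    p = 0 := by
  by_contra hp0
  have hnat : p.natDegree < n := (natDegree_lt_iff_degree_lt hp0).2 hp
  have hcoeff := eq_zero_of_mulVec_eq_zero hξ ((ctrlMat_mulVec_coeff B ξ hnat).trans h)
  refine hp0 (ext fun i => ?_)
  rcases lt_or_ge i n with hi | hi
  · simpa using congrFun hcoeff ⟨i, hi⟩
  · exact coeff_eq_zero_of_natDegree_lt (hnat.trans_le hi)

theorem prodCtrl_eq_aeval {n : ℕ} (B : Matrix (Fin n) (Fin n) ℝ) (l : ℕ) (u : ℕ → ℝ) :
    prodCtrl B l u = aeval B (∏ k ∈ range l, (1 + C (u k) * X)) := by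
  induction l with
  | zero => simp [prodCtrl]
  | succ l ih =>
    rw [prod_range_succ, mul_comm, map_mul, ← ih]
    simp [prodCtrl, List.range_succ, Algebra.smul_def]

theorem hasStrictFDerivAt_aeval_prod_one_add_C_mul_X {E A ι : Type*} [NormedAddCommGroup E]
    [NormedSpace ℝ E] [NormedRing A] [NormedAlgebra ℝ A] [DecidableEq ι] (T : A)
    (c : ι → ℝ) (g : ι → E →L[ℝ] ℝ) (s : Finset ι) :
    HasStrictFDerivAt (fun a => aeval T (∏ k ∈ s, (1 + C (c k + g k a) * X)))
      (∑ k ∈ s, (g k).smulRight (aeval T (X * ∏ j ∈ s.erase k, (1 + C (c j) * X)))) 0 := by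
  induction s using Finset.induction_on with
  | empty => simpa using hasStrictFDerivAt_const (1 : A) (0 : E)
  | insert i s hi ih =>
    have hfactor : HasStrictFDerivAt (fun a => aeval T (1 + C (c i + g i a) * X))
        ((g i).smulRight T) 0 := by
      have haffine : (fun a => aeval T (1 + C (c i + g i a) * X)) =
          fun a => aeval T (1 + C (c i) * X) + (g i).smulRight T a := by
        ext a; simp [add_mul, add_assoc, Algebra.smul_def]
      rw [haffine]
      exact ((g i).smulRight T).hasStrictFDerivAt.const_add _
    simp_rw [prod_insert hi, map_mul]
    refine (hfactor.mul' ih).congr_fderiv (ContinuousLinearMap.ext fun v => ?_)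
    have hpoly := congrArg (aeval T)
      (mul_sum_smul_X_mul_prod_erase (fun j => 1 + C (c j) * X) (fun k => g k v) hi)
    simp only [map_add, map_mul, map_sum, map_smul, map_one, aeval_X, aeval_C] at hpoly
    simpa using hpoly

section LocalSurjectivity

-- Any algebra norm on matrices would do: it only serves to differentiate matrix-valued maps.
attribute [local instance] Matrix.linftyOpNormedRing Matrix.linftyOpNormedAlgebra

theorem eventually_steers {n : ℕ} {B : Matrix (Fin n) (Fin n) ℝ} (hB : IsUnit B)
    {ξ : Fin n → ℝ} (hξ : (ctrlMat B ξ).det ≠ 0) {l : ℕ} (hnl : n ≤ l) (hl : 0 < l)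
    {c : ℕ → ℝ} (hc : Set.InjOn c (range n)) (hc0 : ∀ k < n, c k ≠ 0)
    (hP : aeval B (∏ k ∈ range l, (1 + C (c k) * X)) = 1) :
    ∀ᶠ η in 𝓝 ξ, steers B ξ η := by
  set f : ℕ → ℝ[X] := fun k => 1 + C (c k) * X
  set g : ℕ → (Fin n → ℝ) →L[ℝ] ℝ := fun k =>
    if h : k < n then ContinuousLinearMap.proj ⟨k, h⟩ else 0
  set ev : Matrix (Fin n) (Fin n) ℝ →L[ℝ] (Fin n → ℝ) :=
    LinearMap.toContinuousLinearMap ((Matrix.mulVecBilin ℝ ℝ).flip ξ)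
  set D := ∑ k ∈ range l, (g k).smulRight (aeval B (X * ∏ j ∈ (range l).erase k, f j))
  set F : (Fin n → ℝ) → (Fin n → ℝ) := fun a => prodCtrl B l (fun k => c k + g k a) *ᵥ ξ
  have hF : HasStrictFDerivAt F (ev.comp D) 0 := by
    have hcomp : F = ev ∘ fun a => aeval B (∏ k ∈ range l, (1 + C (c k + g k a) * X)) := by
      ext1 a; simp [F, ev, prodCtrl_eq_aeval]
    rw [hcomp]
    exact ev.hasStrictFDerivAt.comp 0 (hasStrictFDerivAt_aeval_prod_one_add_C_mul_X B c g _)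
  have hF0 : F 0 = ξ := by simpa [F, prodCtrl_eq_aeval] using congrArg (· *ᵥ ξ) hP
  have hDv : ∀ v, (ev.comp D) v = aeval B (X * (∏ j ∈ Ico n l, f j)) *ᵥ
      (aeval B (∑ k ∈ range n, g k v • ∏ j ∈ (range n).erase k, f j) *ᵥ ξ) := by
    intro v
    rw [Matrix.mulVec_mulVec, ← map_mul, ← sum_smul_X_mul_prod_erase_range f hnl fun k hk => by
      simp [g, not_lt.2 hk]]
    simp [D, ev, map_sum, Matrix.sum_mulVec, Matrix.smul_mulVec]
  have hinj : Function.Injective (ev.comp D) := by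
    refine (injective_iff_map_eq_zero _).2 fun v hv => ?_
    have hunit : IsUnit (aeval B (X * ∏ j ∈ Ico n l, f j)) := by
      rw [map_mul, aeval_X]
      exact hB.mul (isUnit_aeval_of_dvd hP
        (prod_dvd_prod_of_subset _ _ f fun k hk => mem_range.2 (mem_Ico.1 hk).2))
    rw [hDv, ← Matrix.mulVec_zero (aeval B (X * ∏ j ∈ Ico n l, f j))] at hv
    have hdeg : (∑ k ∈ range n, g k v • ∏ j ∈ (range n).erase k, f j) ∈ degreeLT ℝ n :=
      Submodule.sum_mem _ fun k hk => Submodule.smul_mem _ _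
        (mem_degreeLT.2 (by simpa using degree_prod_erase_one_add_C_mul_X_lt hk c))
    have hsum := eq_zero_of_aeval_mulVec_eq_zero hξ (mem_degreeLT.1 hdeg)
      (Matrix.mulVec_injective_iff_isUnit.2 hunit hv)
    have hg := eq_zero_of_sum_smul_prod_erase_one_add_C_mul_X_eq_zero hc
      (fun k hk => hc0 k (mem_range.1 hk)) hsum
    ext j
    simpa [g] using hg j (mem_range.2 j.2)
  have hmap := hF.map_nhds_eq_of_surj
    (LinearMap.range_eq_top.2 (LinearMap.injective_iff_surjective.1 hinj))
  rw [hF0] at hmap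
  rw [← hmap, eventually_map]
  exact Eventually.of_forall fun a => ⟨l, hl, _, rfl⟩

end LocalSurjectivity

theorem Finset.exists_bijOn_range {α : Type*} [Nonempty α] (U : Finset α) :
    ∃ c : ℕ → α, Set.BijOn c (range #U) U := by
  classical
  refine ⟨fun k => if h : k < #U then U.equivFin.symm ⟨k, h⟩ else Classical.arbitrary α,
    fun k hk => ?_, fun j hj k hk hjk => ?_, fun u hu => ?_⟩
  · simp [dif_pos (mem_range.1 hk)]
  · simp only [coe_range, Set.mem_Iio] at hj hk
    simpa [dif_pos hj, dif_pos hk] using hjk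
  · exact ⟨U.equivFin ⟨u, hu⟩, by simp, by simp⟩

theorem stmt6_general {n : ℕ} (B : Matrix (Fin n) (Fin n) ℝ)
    (hdet : B.det ≠ 0) (hcyc : minpoly ℝ B = B.charpoly)
    (hsplit : (B.charpoly.map (RingHom.id ℝ)).Splits)
    (hmult : ∀ μ : ℝ, (minpoly ℝ B).rootMultiplicity μ ≤ 2)
    (ξ : Fin n → ℝ) (hξ : (ctrlMat B ξ).det ≠ 0) :
    ∃ ρ : ℝ, 0 < ρ ∧ ∀ η : Fin n → ℝ, ‖η - ξ‖ < ρ → steers B ξ η := by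
  obtain ⟨U, hdeg, hU, hU0, hdvd⟩ := exists_finset_dvd_prod_one_add_C_mul_X_sub_one
    B.charpoly_monic.ne_zero (by simpa using hsplit) (fun μ => hcyc ▸ hmult μ)
  rw [charpoly_natDegree_eq_dim, Fintype.card_fin] at hdeg
  obtain ⟨c, hc⟩ := U.exists_bijOn_range
  have hP : aeval B (∏ k ∈ range #U, (1 + C (c k) * X)) = 1 := by
    obtain ⟨q, hq⟩ := hdvd
    rw [prod_nbij (g := fun u => 1 + C u * X) c hc.mapsTo hc.injOn hc.surjOn fun _ _ => rfl,
      ← sub_add_cancel (∏ u ∈ U, _) 1, hq, map_add, map_mul, aeval_self_charpoly, zero_mul,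
      map_one, zero_add]
  have hsteers := eventually_steers ((isUnit_iff_isUnit_det B).2 hdet.isUnit) hξ hdeg
    hU.card_pos (hc.injOn.mono (coe_subset.2 (range_subset_range.2 hdeg)))
    (fun k hk => ne_of_mem_of_not_mem (hc.mapsTo (mem_range.2 (hk.trans_le hdeg))) hU0) hP
  obtain ⟨ρ, hρ, hball⟩ := Metric.eventually_nhds_iff.1 hsteers
  exact ⟨ρ, hρ, fun η hη => hball (by rwa [dist_eq_norm])⟩

/-- under the near-controllability conditions on `B`, every `ξ` with
`det [ξ, Bξ, …, B^{n-1}ξ] ≠ 0` can be steered to every `η` sufficiently close to `ξ`. -/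
theorem stmt6 {n : ℕ} (hn : 1 ≤ n) (B : Matrix (Fin n) (Fin n) ℝ)
    (hdet : B.det ≠ 0) (hcyc : minpoly ℝ B = B.charpoly)
    (hsplit : (B.charpoly.map (RingHom.id ℝ)).Splits)
    (hmult : ∀ μ : ℝ, (minpoly ℝ B).rootMultiplicity μ ≤ 2)
    (ξ : Fin n → ℝ) (hξ : (ctrlMat B ξ).det ≠ 0) :
    ∃ ρ : ℝ, 0 < ρ ∧ ∀ η : Fin n → ℝ, ‖η - ξ‖ < ρ → steers B ξ η :=
  stmt6_general B hdet hcyc hsplit hmult ξ hξ
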